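/- arXiv:2103.00729 — 3 statements merged into one kernel-verified Lean document; each statement's English description precedes it below -/
import Mathlib

section
/- In a binary-conflict-free net, if σt is a firing sequence, t does not occur in ρ₁, and σρ₁tρ₂ is a firing sequence, then σtρ₁ρ₂ is a firing sequence leading to the same marking as σρ₁tρ₂. -/
structure Net (S T : Type) where
  pre : T → S → ℕ
  post : T → S → ℕ
  M0 : S → ℕ

namespace Net

variable {S T : Type}

/-- `t` is enabled in marking `M`: all tokens in its preplaces are available. -/
def enabled (N : Net S T) (t : T) (M : S → ℕ) : Prop := ∀ s, N.pre t s ≤ M s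

/-- The marking obtained by firing `t` from `M`. -/
def fire (N : Net S T) (M : S → ℕ) (t : T) : S → ℕ :=
  fun s => M s - N.pre t s + N.post t s

/-- `Fires N M σ M'` : the word `σ` of transitions can fire from `M`, leading to `M'`. -/
inductive Fires (N : Net S T) : (S → ℕ) → List T → (S → ℕ) → Prop
  | nil (M : S → ℕ) : Fires N M [] M
  | cons {M M' : S → ℕ} {t : T} {σ : List T} (h : N.enabled t M)
      (h' : Fires N (N.fire M t) σ M') : Fires N M (t :: σ) M'

/-- `σ` is a firing sequence of `N`. -/
def FS (N : Net S T) (σ : List T) : Prop := ∃ M, N.Fires N.M0 σ M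

/-- `M` is reachable from the initial marking. -/
def Reachable (N : Net S T) (M : S → ℕ) : Prop := ∃ σ, N.Fires N.M0 σ M

/-- The step (multiset) `{t,u}` is enabled in `M`. -/
def enabledPair (N : Net S T) (t u : T) (M : S → ℕ) : Prop :=
  ∀ s, N.pre t s + N.pre u s ≤ M s

/-- Binary-conflict-freeness. -/
def bcf (N : Net S T) : Prop :=
  ∀ M, N.Reachable M → ∀ t u, t ≠ u → N.enabled t M → N.enabled u M → N.enabledPair t u M

/-- Adjacency of firing sequences: exchange of two consecutive transitions forming an enabled step. -/
def Adjacent (N : Net S T) (σ ρ : List T) : Prop :=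
  N.FS σ ∧ N.FS ρ ∧ ∃ σ₁ t u σ₂ M, σ = σ₁ ++ t :: u :: σ₂ ∧ ρ = σ₁ ++ u :: t :: σ₂ ∧
    N.Fires N.M0 σ₁ M ∧ N.enabledPair t u M

/-- Reflexive-transitive closure of adjacency. -/
def AdjStar (N : Net S T) : List T → List T → Prop := Relation.ReflTransGen N.Adjacent

/-- Prefix relation on partial FS-runs, on representatives: `[σ] ≤ [ρ]`. -/
def runLe (N : Net S T) (σ ρ : List T) : Prop := ∃ μ, σ <+: μ ∧ N.AdjStar μ ρ

end Net

namespace Net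

variable {S T : Type}

lemma Fires.append_elim {N : Net S T} {M M' : S → ℕ} {σ ρ : List T}
    (h : N.Fires M (σ ++ ρ) M') : ∃ Mi, N.Fires M σ Mi ∧ N.Fires Mi ρ M' := by
  induction σ generalizing M with
  | nil => exact ⟨M, Fires.nil M, h⟩
  | cons a σ ih =>
    cases h with
    | cons he h' =>
      obtain ⟨Mi, h1, h2⟩ := ih h'
      exact ⟨Mi, Fires.cons he h1, h2⟩

lemma Fires.append_intro {N : Net S T} {M Mi M' : S → ℕ} {σ ρ : List T}
    (h1 : N.Fires M σ Mi) (h2 : N.Fires Mi ρ M') : N.Fires M (σ ++ ρ) M' := by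
  induction h1 with
  | nil => exact h2
  | cons he _ ih => exact Fires.cons he (ih h2)

lemma Fires.det {N : Net S T} {M M₁ M₂ : S → ℕ} {σ : List T}
    (h1 : N.Fires M σ M₁) (h2 : N.Fires M σ M₂) : M₁ = M₂ := by
  induction h1 generalizing M₂ with
  | nil => cases h2; rfl
  | cons he _ ih => cases h2 with | cons _ h' => exact ih h'

lemma exchange {N : Net S T} (hbcf : N.bcf) {M M' : S → ℕ} (hM : N.Reachable M)
    {ρ₁ ρ₂ : List T} {t : T} (ht : t ∉ ρ₁) (hen : N.enabled t M)
    (h : N.Fires M (ρ₁ ++ t :: ρ₂) M') : N.Fires M (t :: (ρ₁ ++ ρ₂)) M' := by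
  induction ρ₁ generalizing M with
  | nil => simpa using h
  | cons u ρ ih =>
    cases h with
    | cons hu h' =>
      have hne : t ≠ u := fun e => ht (by simp [e])
      have hpair := hbcf M hM t u hne hen hu
      have hent : N.enabled t (N.fire M u) := by
        intro s
        have := hpair s
        simp only [fire]
        omega
      have hreach : N.Reachable (N.fire M u) := by
        obtain ⟨τ, hτ⟩ := hM
        exact ⟨τ ++ [u], Fires.append_intro hτ (Fires.cons hu (Fires.nil _))⟩
      have ih' := ih hreach (fun e => ht (List.mem_cons_of_mem _ e)) hent h'
      cases ih' with
      | cons _ h'' =>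
        refine Fires.cons hen (Fires.cons ?_ ?_)
        · intro s
          have := hpair s
          simp only [fire]
          omega
        · have hcomm : N.fire (N.fire M u) t = N.fire (N.fire M t) u := by
            funext s
            have := hpair s
            simp only [fire]
            omega
          rw [← hcomm]
          exact h''

end Net

/-- in a binary-conflict-free net, if `σt` is a firing sequence, `t ∉ ρ₁`,
and `σρ₁tρ₂` is a firing sequence, then `σtρ₁ρ₂` is a firing sequence leading to the
same marking as `σρ₁tρ₂`. -/
theorem stmt4 {S T : Type} (N : Net S T) (hbcf : N.bcf) (σ ρ₁ ρ₂ : List T) (t : T)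
    (h1 : N.FS (σ ++ [t])) (ht : t ∉ ρ₁) (h2 : N.FS (σ ++ ρ₁ ++ t :: ρ₂)) :
    ∃ M, N.Fires N.M0 (σ ++ t :: (ρ₁ ++ ρ₂)) M ∧ N.Fires N.M0 (σ ++ ρ₁ ++ t :: ρ₂) M := by
  obtain ⟨M', h2⟩ := h2
  rw [List.append_assoc] at h2
  obtain ⟨Mσ, hσ, hrest⟩ := Net.Fires.append_elim h2
  obtain ⟨M1, h1⟩ := h1
  obtain ⟨Mσ', hσ', ht'⟩ := Net.Fires.append_elim h1
  have heq : Mσ' = Mσ := Net.Fires.det hσ' hσ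
  rw [heq] at ht'
  have hen : N.enabled t Mσ := by cases ht' with | cons he _ => exact he
  have hx := Net.exchange hbcf ⟨σ, hσ⟩ ht hen hrest
  exact ⟨M', Net.Fires.append_intro hσ hx, by rw [List.append_assoc]; exact h2⟩
end

section
/- In a binary-conflict-free net, any two firing sequences σ and σ' can be extended to a common multiset of transition occurrences: there exist words μ, μ' such that σμ and σ'μ' are both firing sequences and σμ and σ'μ' contain the same multiset of transitions (and lead to the same marking). -/
section Aux

variable {S T : Type}

lemma fires_append {N : Net S T} {M M' M'' : S → ℕ} {σ ρ : List T}
    (h : N.Fires M σ M') (h' : N.Fires M' ρ M'') : N.Fires M (σ ++ ρ) M'' := by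
  induction h with
  | nil => simpa
  | cons he _ ih => exact Net.Fires.cons he (ih h')

lemma reachable_fires {N : Net S T} {M M' : S → ℕ} {σ : List T}
    (h : N.Reachable M) (h' : N.Fires M σ M') : N.Reachable M' := by
  obtain ⟨ρ, hρ⟩ := h
  exact ⟨ρ ++ σ, fires_append hρ h'⟩

lemma pair_enabled_after {N : Net S T} {t u : T} {M : S → ℕ}
    (hp : N.enabledPair t u M) : N.enabled u (N.fire M t) := by
  intro s
  have := hp s
  simp only [Net.fire]
  omega

lemma fire_comm {N : Net S T} {t u : T} {M : S → ℕ}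
    (hp : N.enabledPair t u M) : N.fire (N.fire M t) u = N.fire (N.fire M u) t := by
  funext s
  have := hp s
  simp only [Net.fire]
  omega

lemma pair_swap {N : Net S T} {t u : T} {M : S → ℕ}
    (hp : N.enabledPair t u M) : N.enabledPair u t M := by
  intro s; have := hp s; omega

/-- Residual lemma: firing an enabled `t` commutes with a firing sequence `σ'`. -/
lemma resid {N : Net S T} (hbcf : N.bcf) :
    ∀ (σ' : List T) (M M₁ : S → ℕ), N.Reachable M → N.Fires M σ' M₁ →
      ∀ t, N.enabled t M →
      (t ∈ σ' → ∃ ρ : List T, (↑σ' : Multiset T) = t ::ₘ ↑ρ ∧ N.Fires (N.fire M t) ρ M₁) ∧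
      (t ∉ σ' → N.enabled t M₁ ∧ N.Fires (N.fire M t) σ' (N.fire M₁ t)) := by
  intro σ'
  induction σ' with
  | nil =>
    intro M M₁ _ hf t ht
    cases hf
    exact ⟨by simp, fun _ => ⟨ht, Net.Fires.nil _⟩⟩
  | cons u ρ ih =>
    intro M M₁ hreach hf t ht
    cases hf with
    | cons hu hρ =>
      by_cases htu : t = u
      · subst htu
        constructor
        · intro _; exact ⟨ρ, by simp, hρ⟩
        · intro hmem; exact absurd List.mem_cons_self hmem
      · have hp : N.enabledPair t u M := hbcf M hreach t u htu ht hu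
        have htu' : N.enabled t (N.fire M u) := pair_enabled_after (pair_swap hp)
        have hut' : N.enabled u (N.fire M t) := pair_enabled_after hp
        have hcomm := fire_comm hp
        have hreach' : N.Reachable (N.fire M u) :=
          reachable_fires hreach (Net.Fires.cons hu (Net.Fires.nil _))
        have IH := ih (N.fire M u) M₁ hreach' hρ t htu'
        constructor
        · intro hmem
          have hmem' : t ∈ ρ := by
            rcases List.mem_cons.1 hmem with h | h
            · exact absurd h htu
            · exact h
          obtain ⟨ρ₂, hmul, hfρ₂⟩ := IH.1 hmem'
          refine ⟨u :: ρ₂, ?_, ?_⟩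
          · have : (↑(u :: ρ) : Multiset T) = u ::ₘ ↑ρ := by simp
            rw [this, hmul, Multiset.cons_swap]
            simp
          · exact Net.Fires.cons hut' (by rw [hcomm]; exact hfρ₂)
        · intro hmem
          have hmem' : t ∉ ρ := fun h => hmem (List.mem_cons_of_mem _ h)
          obtain ⟨hen, hfρ⟩ := IH.2 hmem'
          refine ⟨hen, Net.Fires.cons hut' ?_⟩
          rw [hcomm]; exact hfρ

/-- Keller's theorem: confluence from a common reachable marking. -/
lemma keller {N : Net S T} (hbcf : N.bcf) :
    ∀ (σ : List T) (M Ma Mb : S → ℕ) (σ' : List T), N.Reachable M →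
      N.Fires M σ Ma → N.Fires M σ' Mb →
      ∃ μ μ' Mc, N.Fires Ma μ Mc ∧ N.Fires Mb μ' Mc ∧
        (↑(σ ++ μ) : Multiset T) = ↑(σ' ++ μ') := by
  intro σ
  induction σ with
  | nil =>
    intro M Ma Mb σ' _ ha hb
    cases ha
    exact ⟨σ', [], Mb, hb, Net.Fires.nil _, by simp⟩
  | cons t ρ ih =>
    intro M Ma Mb σ' hreach ha hb
    cases ha with
    | cons ht hρ =>
      have hreach' : N.Reachable (N.fire M t) :=
        reachable_fires hreach (Net.Fires.cons ht (Net.Fires.nil _))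
      have R := resid hbcf σ' M Mb hreach hb t ht
      by_cases hmem : t ∈ σ'
      · obtain ⟨ρ₂, hmul, hf₂⟩ := R.1 hmem
        obtain ⟨μ, μ', Mc, h1, h2, h3⟩ := ih (N.fire M t) Ma Mb ρ₂ hreach' hρ hf₂
        refine ⟨μ, μ', Mc, h1, h2, ?_⟩
        have e1 : (↑(t :: ρ ++ μ) : Multiset T) = t ::ₘ ↑(ρ ++ μ) := by simp
        rw [e1, h3]
        show t ::ₘ ↑(ρ₂ ++ μ') = (↑(σ' ++ μ') : Multiset T)
        rw [← Multiset.coe_add, ← Multiset.coe_add, hmul]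
        rw [Multiset.cons_add]
      · obtain ⟨hen, hf⟩ := R.2 hmem
        obtain ⟨μ, μ', Mc, h1, h2, h3⟩ := ih (N.fire M t) Ma (N.fire Mb t) σ' hreach' hρ hf
        refine ⟨μ, t :: μ', Mc, h1, fires_append (Net.Fires.cons hen (Net.Fires.nil _)) h2, ?_⟩
        have e1 : (↑(t :: ρ ++ μ) : Multiset T) = t ::ₘ ↑(ρ ++ μ) := by simp
        rw [e1, h3, ← Multiset.coe_add, ← Multiset.coe_add]
        have e2 : (↑(t :: μ') : Multiset T) = t ::ₘ ↑μ' := by simp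
        rw [e2, add_comm (↑σ' : Multiset T) (t ::ₘ (↑μ' : Multiset T)),
          Multiset.cons_add, add_comm]

end Aux

/-- in a binary-conflict-free net, any two firing sequences can be
extended to a common multiset of transition occurrences, leading to the same marking. -/
theorem stmt5 {S T : Type} (N : Net S T) (hbcf : N.bcf) (σ σ' : List T)
    (h1 : N.FS σ) (h2 : N.FS σ') :
    ∃ μ μ' M, N.Fires N.M0 (σ ++ μ) M ∧ N.Fires N.M0 (σ' ++ μ') M ∧
      (↑(σ ++ μ) : Multiset T) = ↑(σ' ++ μ') := by
  obtain ⟨Ma, ha⟩ := h1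
  obtain ⟨Mb, hb⟩ := h2
  obtain ⟨μ, μ', Mc, f1, f2, f3⟩ :=
    keller hbcf σ N.M0 Ma Mb σ' ⟨[], Net.Fires.nil _⟩ ha hb
  exact ⟨μ, μ', Mc, fires_append ha f1, fires_append hb f2, f3⟩
end

section
/- If σ ↔* ρ and σμ is a firing sequence, then ρμ is a firing sequence and σμ ↔* ρμ. -/
namespace Net

variable {S T : Type}

theorem fires_append_iff (N : Net S T) (M M'' : S → ℕ) (σ τ : List T) :
    N.Fires M (σ ++ τ) M'' ↔ ∃ M', N.Fires M σ M' ∧ N.Fires M' τ M'' := by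
  induction σ generalizing M with
  | nil =>
    simp only [List.nil_append]
    constructor
    · intro h; exact ⟨M, Fires.nil M, h⟩
    · rintro ⟨M', h, h'⟩; cases h; exact h'
  | cons t σ ih =>
    constructor
    · rintro ⟨-, h, h'⟩ <;> rename_i h h'
      · obtain ⟨M', h1, h2⟩ := (ih _).mp h'
        exact ⟨M', Fires.cons h h1, h2⟩
    · rintro ⟨M', h, h'⟩
      cases h with
      | cons he hf => exact Fires.cons he ((ih _).mpr ⟨M', hf, h'⟩)

theorem fires_det (N : Net S T) {M M₁ M₂ : S → ℕ} {σ : List T}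
    (h₁ : N.Fires M σ M₁) (h₂ : N.Fires M σ M₂) : M₁ = M₂ := by
  induction h₁ generalizing M₂ with
  | nil => cases h₂; rfl
  | cons he hf ih => cases h₂ with
    | cons he' hf' => exact ih hf'

theorem swap_fires (N : Net S T) {M M' : S → ℕ} {t u : T} {τ : List T}
    (hp : N.enabledPair t u M) (h : N.Fires M (t :: u :: τ) M') :
    N.Fires M (u :: t :: τ) M' := by
  cases h with
  | cons het h' => cases h' with
    | cons heu h'' =>
      have heu' : N.enabled u M := fun s => le_trans (Nat.le_add_left _ _) (hp s)
      have het' : N.enabled t (N.fire M u) := by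
        intro s; have := hp s; simp [fire]; omega
      have : N.fire (N.fire M u) t = N.fire (N.fire M t) u := by
        funext s; have := hp s; simp [fire]; omega
      exact Fires.cons heu' (Fires.cons het' (this ▸ h''))

theorem adjacent_append (N : Net S T) (σ ρ μ : List T)
    (hadj : N.Adjacent σ ρ) (hσμ : N.FS (σ ++ μ)) :
    N.FS (ρ ++ μ) ∧ N.Adjacent (σ ++ μ) (ρ ++ μ) := by
  obtain ⟨-, -, σ₁, t, u, σ₂, M, rfl, rfl, hM, hp⟩ := hadj
  obtain ⟨M'', hf⟩ := hσμ
  rw [List.append_assoc] at hf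
  obtain ⟨M₁, hf1, hf2⟩ := (N.fires_append_iff _ _ _ _).mp hf
  cases N.fires_det hM hf1
  simp only [List.cons_append] at hf2 ⊢
  have hf2' := N.swap_fires hp hf2
  have hρμ : N.FS ((σ₁ ++ u :: t :: σ₂) ++ μ) :=
    ⟨M'', by rw [List.append_assoc]
             exact (N.fires_append_iff _ _ _ _).mpr ⟨M, hM, hf2'⟩⟩
  refine ⟨hρμ, ⟨⟨M'', by simpa using hf⟩, hρμ, σ₁, t, u, σ₂ ++ μ, M, ?_, ?_, hM, hp⟩⟩
  · simp
  · simp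

end Net

/-- if `σ ↔* ρ` and `σμ` is a firing sequence, then `ρμ` is a firing
sequence and `σμ ↔* ρμ`. -/
theorem stmt7 {S T : Type} (N : Net S T) (σ ρ μ : List T)
    (h : N.AdjStar σ ρ) (hσμ : N.FS (σ ++ μ)) :
    N.FS (ρ ++ μ) ∧ N.AdjStar (σ ++ μ) (ρ ++ μ) := by
  induction h with
  | refl => exact ⟨hσμ, Relation.ReflTransGen.refl⟩
  | tail hab hbc ih =>
    obtain ⟨hFS, hstar⟩ := ih
    obtain ⟨hFS', hadj⟩ := Net.adjacent_append _ _ _ _ hbc hFS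
    exact ⟨hFS', hstar.tail hadj⟩
end
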